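/- Let δ > 0 and let Y be a random variable supported on [0, M] whose distribution has a density f with f(y) ≥ b > 0 for all y ∈ [0, M] and sup_{y ∈ [0,M]} f(y) < ∞. Then the dual objective φ(α) = −α log E[exp(−Y/α)] − αδ satisfies sup_{α > 0} φ(α) > 0 = essinf Y; in particular the supremum of φ over α ≥ 0 (with φ(0) := essinf Y) is not attained at α = 0. -/

import Mathlib

open MeasureTheory Real Set

/-!
Since the law of `Y` has a density vanishing off `[0, M]`, it charges neither `(-∞, 0)` nor the
point `0`, so `Y > 0` almost surely. By dominated convergence `E[exp(−Y/α)] → 0` as `α → 0⁺`, so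
for small `α` we get `log E[exp(−Y/α)] < −δ`, i.e. `φ(α) > 0`. On the other hand the density is
at least `b > 0` on `[0, M]`, so `Y` charges every `[0, a)` and `essinf Y = 0 = φ(0)`, while
`Y ≤ M` bounds `φ` above by `M`.
-/

/-- The dual objective `φ(α) = −α log E[exp(−Y/α)] − αδ` of the KL-DRO evaluation problem,
with `φ(0)` defined to be the essential infimum of `Y`. -/
noncomputable def dualKL {Ω : Type*} [MeasurableSpace Ω] (μ : Measure Ω) (Y : Ω → ℝ)
    (δ α : ℝ) : ℝ :=
  if α = 0 then essInf Y μ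
  else -α * Real.log (∫ ω, Real.exp (-Y ω / α) ∂μ) - α * δ

open Filter Topology

theorem essInf_eq_of_ae_le_of_measure_ne_zero {α β : Type*} [MeasurableSpace α] {μ : Measure α}
    [ConditionallyCompleteLinearOrder β] {f : α → β} {c : β} (hc : ∀ᵐ x ∂μ, c ≤ f x)
    (hpos : ∀ a, c < a → μ {x | f x < a} ≠ 0) : essInf f μ = c := by
  rw [essInf_eq_sSup, ← csSup_Iic (a := c)]
  congr 1
  ext a
  refine ⟨fun h => not_lt.1 fun hca => hpos a hca h, fun hac => ?_⟩
  exact measure_mono_null (fun x (hx : f x < a) => not_le.2 (hx.trans_le hac)) (ae_iff.1 hc)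

section LawWithDensity

variable {Ω : Type*} [MeasurableSpace Ω] {μ : Measure Ω} {Y : Ω → ℝ} {f : ℝ → ℝ}

theorem measure_preimage_eq_setLIntegral_of_map_eq_withDensity (hY : Measurable Y)
    (hlaw : μ.map Y = volume.withDensity fun y => ENNReal.ofReal (f y)) {s : Set ℝ}
    (hs : MeasurableSet s) : μ (Y ⁻¹' s) = ∫⁻ y in s, ENNReal.ofReal (f y) := by
  rw [← Measure.map_apply hY hs, hlaw, withDensity_apply _ hs]

theorem ae_mem_Ioc_of_map_eq_withDensity (hY : Measurable Y) {M : ℝ}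
    (hf0 : ∀ y, y ∉ Icc 0 M → f y = 0)
    (hlaw : μ.map Y = volume.withDensity fun y => ENNReal.ofReal (f y)) :
    ∀ᵐ ω ∂μ, Y ω ∈ Ioc 0 M := by
  have hout : μ (Y ⁻¹' (Icc 0 M)ᶜ) = 0 := by
    rw [measure_preimage_eq_setLIntegral_of_map_eq_withDensity hY hlaw measurableSet_Icc.compl,
      setLIntegral_congr_fun measurableSet_Icc.compl fun y hy => by rw [hf0 y hy]]
    simp
  have hzero : μ (Y ⁻¹' {0}) = 0 := by
    rw [← Measure.map_apply hY (measurableSet_singleton 0), hlaw]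
    exact withDensity_absolutelyContinuous _ _ Real.volume_singleton
  refine ae_iff.2 (measure_mono_null (fun ω hω => ?_) (measure_union_null hout hzero))
  by_cases h : Y ω = 0
  · exact Or.inr h
  · exact Or.inl fun hI => hω ⟨hI.1.lt_of_ne' h, hI.2⟩

theorem measure_preimage_Iio_pos_of_map_eq_withDensity (hY : Measurable Y) {M b a : ℝ}
    (hb : 0 < b) (hfb : ∀ y ∈ Icc 0 M, b ≤ f y) (hM : 0 < M) (ha : 0 < a)
    (hlaw : μ.map Y = volume.withDensity fun y => ENNReal.ofReal (f y)) :
    0 < μ (Y ⁻¹' Iio a) := by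
  rw [measure_preimage_eq_setLIntegral_of_map_eq_withDensity hY hlaw measurableSet_Iio]
  calc 0 < ∫⁻ _ in Ico 0 (min a M), ENNReal.ofReal b := by
        rw [setLIntegral_const, Real.volume_Ico]
        simp [hb, ha, hM]
    _ ≤ ∫⁻ y in Ico 0 (min a M), ENNReal.ofReal (f y) :=
        setLIntegral_mono' measurableSet_Ico fun y hy =>
          ENNReal.ofReal_le_ofReal (hfb y ⟨hy.1, hy.2.le.trans (min_le_right _ _)⟩)
    _ ≤ ∫⁻ y in Iio a, ENNReal.ofReal (f y) :=
        lintegral_mono_set fun y hy => hy.2.trans_le (min_le_left _ _)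

end LawWithDensity

section ExpMoment

variable {Ω : Type*} [MeasurableSpace Ω] {μ : Measure Ω} {Y : Ω → ℝ}

theorem norm_exp_neg_div_le_one {y α : ℝ} (hy : 0 ≤ y) (hα : 0 ≤ α) : ‖exp (-y / α)‖ ≤ 1 := by
  rw [Real.norm_of_nonneg (exp_pos _).le, exp_le_one_iff]
  exact div_nonpos_of_nonpos_of_nonneg (neg_nonpos.2 hy) hα

theorem integrable_exp_neg_div [IsFiniteMeasure μ] (hY : AEMeasurable Y μ)
    (hY0 : ∀ᵐ ω ∂μ, 0 ≤ Y ω) {α : ℝ} (hα : 0 ≤ α) :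
    Integrable (fun ω => exp (-Y ω / α)) μ :=
  .of_bound (hY.neg.div_const α).exp.aestronglyMeasurable 1
    (hY0.mono fun _ hω => norm_exp_neg_div_le_one hω hα)

theorem tendsto_integral_exp_neg_div_nhdsGT_zero [IsFiniteMeasure μ] (hY : AEMeasurable Y μ)
    (hpos : ∀ᵐ ω ∂μ, 0 < Y ω) :
    Tendsto (fun α => ∫ ω, exp (-Y ω / α) ∂μ) (𝓝[>] 0) (𝓝 0) := by
  have hlim := tendsto_integral_filter_of_dominated_convergence (μ := μ) (l := 𝓝[>] (0 : ℝ))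
    (F := fun α ω => exp (-Y ω / α)) (f := 0) (fun _ => 1)
    (.of_forall fun α => (hY.neg.div_const α).exp.aestronglyMeasurable)
    (eventually_mem_nhdsWithin.mono fun α (hα : 0 < α) =>
      hpos.mono fun _ hω => norm_exp_neg_div_le_one hω.le hα.le)
    (integrable_const 1)
    (hpos.mono fun ω hω => tendsto_exp_atBot.comp <|
      (tendsto_inv_nhdsGT_zero.const_mul_atTop_of_neg (neg_neg_of_pos hω)).congr fun α => by
        ring)
  simpa using hlim

theorem exists_pos_neg_mul_log_integral_exp_neg_div_sub_pos [IsProbabilityMeasure μ]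
    (hY : AEMeasurable Y μ) (hpos : ∀ᵐ ω ∂μ, 0 < Y ω) (δ : ℝ) :
    ∃ α, 0 < α ∧ 0 < -α * log (∫ ω, exp (-Y ω / α) ∂μ) - α * δ := by
  obtain ⟨α, hα, hE⟩ := (eventually_mem_nhdsWithin.and
    ((tendsto_integral_exp_neg_div_nhdsGT_zero hY hpos).eventually
      (gt_mem_nhds (exp_pos (-δ))))).exists
  have hEpos : 0 < ∫ ω, exp (-Y ω / α) ∂μ :=
    integral_exp_pos (integrable_exp_neg_div hY (hpos.mono fun _ h => h.le) hα.le)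
  have hlog : log (∫ ω, exp (-Y ω / α) ∂μ) < -δ := (log_lt_iff_lt_exp hEpos).2 hE
  exact ⟨α, hα, by linarith [mul_pos hα (show 0 < -δ - log (∫ ω, exp (-Y ω / α) ∂μ) by linarith)]⟩

theorem neg_mul_log_integral_exp_neg_div_le [IsProbabilityMeasure μ] (hY : AEMeasurable Y μ)
    {M : ℝ} (hY0 : ∀ᵐ ω ∂μ, 0 ≤ Y ω) (hYM : ∀ᵐ ω ∂μ, Y ω ≤ M) {α : ℝ} (hα : 0 < α) :
    -α * log (∫ ω, exp (-Y ω / α) ∂μ) ≤ M := by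
  have hE : exp (-M / α) ≤ ∫ ω, exp (-Y ω / α) ∂μ := by
    calc exp (-M / α) = ∫ _, exp (-M / α) ∂μ := by simp
      _ ≤ ∫ ω, exp (-Y ω / α) ∂μ :=
        integral_mono_ae (integrable_const _) (integrable_exp_neg_div hY hY0 hα.le)
          (hYM.mono fun ω hω => show exp (-M / α) ≤ exp (-Y ω / α) by gcongr)
  have hlog := log_le_log (exp_pos _) hE
  rw [log_exp, div_le_iff₀ hα] at hlog
  linarith

end ExpMoment

theorem stmt7_general {Ω : Type*} [MeasurableSpace Ω] (μ : Measure Ω) [IsProbabilityMeasure μ]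
    (Y : Ω → ℝ) (hY : Measurable Y) (M b : ℝ) (hb : 0 < b) (δ : ℝ) (hδ : 0 < δ)
    (f : ℝ → ℝ)
    (hf0 : ∀ y : ℝ, y ∉ Set.Icc 0 M → f y = 0)
    (hfb : ∀ y ∈ Set.Icc (0 : ℝ) M, b ≤ f y)
    (hlaw : Measure.map Y μ = MeasureTheory.volume.withDensity
      (fun y => ENNReal.ofReal (f y))) :
    essInf Y μ = 0 ∧
    (0 : ℝ) < sSup {r : ℝ | ∃ α : ℝ, 0 < α ∧
        r = -α * Real.log (∫ ω, Real.exp (-Y ω / α) ∂μ) - α * δ} ∧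
    dualKL μ Y δ 0 < sSup {r : ℝ | ∃ α : ℝ, 0 ≤ α ∧ r = dualKL μ Y δ α} := by
  have hIoc := ae_mem_Ioc_of_map_eq_withDensity hY hf0 hlaw
  have hY0 : ∀ᵐ ω ∂μ, 0 ≤ Y ω := hIoc.mono fun _ h => h.1.le
  have hYM : ∀ᵐ ω ∂μ, Y ω ≤ M := hIoc.mono fun _ h => h.2
  have hM : 0 < M := by
    obtain ⟨ω, hω⟩ := hIoc.exists
    exact hω.1.trans_le hω.2
  have hess : essInf Y μ = 0 := essInf_eq_of_ae_le_of_measure_ne_zero hY0 fun a ha =>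
    (measure_preimage_Iio_pos_of_map_eq_withDensity hY hb hfb hM ha hlaw).ne'
  have hφ_le : ∀ α, 0 < α → -α * log (∫ ω, exp (-Y ω / α) ∂μ) - α * δ ≤ M := fun α hα => by
    linarith [neg_mul_log_integral_exp_neg_div_le hY.aemeasurable hY0 hYM hα, mul_pos hα hδ]
  obtain ⟨α₀, hα₀, hφ₀⟩ := exists_pos_neg_mul_log_integral_exp_neg_div_sub_pos hY.aemeasurable
    (hIoc.mono fun _ h => h.1) δ
  refine ⟨hess, lt_csSup_of_lt ⟨M, ?_⟩ ⟨α₀, hα₀, rfl⟩ hφ₀, ?_⟩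
  · rintro _ ⟨α, hα, rfl⟩
    exact hφ_le α hα
  rw [dualKL, if_pos rfl, hess]
  refine lt_csSup_of_lt ⟨M, ?_⟩ ⟨α₀, hα₀.le, by rw [dualKL, if_neg hα₀.ne']⟩ hφ₀
  rintro _ ⟨α, hα, rfl⟩
  rcases hα.eq_or_lt with rfl | hα
  · simpa [dualKL, hess] using hM.le
  · simpa [dualKL, hα.ne'] using hφ_le α hα

/-- **The optimal dual variable is strictly positive:** if `Y` is supported on `[0, M]` with a
density bounded below by `b > 0` and bounded above on `[0, M]`, then
`sup_{α>0} φ(α) > 0 = essinf Y`; in particular the supremum of `φ` over `α ≥ 0`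
(with `φ(0) := essinf Y`) is not attained at `α = 0`. -/
theorem stmt7 {Ω : Type*} [MeasurableSpace Ω] (μ : Measure Ω) [IsProbabilityMeasure μ]
    (Y : Ω → ℝ) (hY : Measurable Y) (M b : ℝ) (hb : 0 < b) (δ : ℝ) (hδ : 0 < δ)
    (f : ℝ → ℝ) (hfmeas : Measurable f)
    (hf0 : ∀ y : ℝ, y ∉ Set.Icc 0 M → f y = 0)
    (hfb : ∀ y ∈ Set.Icc (0 : ℝ) M, b ≤ f y)
    (hfub : ∃ B : ℝ, ∀ y ∈ Set.Icc (0 : ℝ) M, f y ≤ B)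
    (hlaw : Measure.map Y μ = MeasureTheory.volume.withDensity
      (fun y => ENNReal.ofReal (f y))) :
    essInf Y μ = 0 ∧
    (0 : ℝ) < sSup {r : ℝ | ∃ α : ℝ, 0 < α ∧
        r = -α * Real.log (∫ ω, Real.exp (-Y ω / α) ∂μ) - α * δ} ∧
    dualKL μ Y δ 0 < sSup {r : ℝ | ∃ α : ℝ, 0 ≤ α ∧ r = dualKL μ Y δ α} :=
  stmt7_general μ Y hY M b hb δ hδ f hf0 hfb hlaw
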